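/- Let E be a directed graph, let v be a vertex lying on a terminal path α, and let C be the cluster of v. Then any p ∈ E^{≤∞} with v ∈ p⁰ satisfies p ∼ α; C = T(C) and C is the union of the sets T(β⁰) taken over all terminal paths β with β ∼ α; and the saturated closure of C equals the saturated closure of α⁰, which equals the saturated closure of {u} for any u ∈ C. -/

import Mathlib

/-- A directed graph: vertices, edges, source and range maps. -/
structure DGraph where
  V : Type
  Ed : Type
  s : Ed → V
  r : Ed → V

namespace DGraph

variable (E : DGraph)

/-- One-step adjacency: there is an edge from `u` to `v`. -/
def Adj (u v : E.V) : Prop := ∃ e, E.s e = u ∧ E.r e = v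

/-- `u ≥ v`: there is a (finite) path from `u` to `v`. -/
def Reaches (u v : E.V) : Prop := Relation.ReflTransGen E.Adj u v

/-- The tree `T(W)` of a set of vertices. -/
def tree (W : Set E.V) : Set E.V := {u | ∃ v ∈ W, E.Reaches v u}

/-- The root `R(W)` of a set of vertices. -/
def root (W : Set E.V) : Set E.V := {u | ∃ v ∈ W, E.Reaches u v}

/-- The set of edges emitted by `v`. -/
def emits (v : E.V) : Set E.Ed := {e | E.s e = v}

/-- A sink emits no edges. -/
def IsSink (v : E.V) : Prop := E.emits v = ∅

/-- An infinite emitter emits infinitely many edges. -/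
def IsInfEmitter (v : E.V) : Prop := (E.emits v).Infinite

/-- A regular vertex is neither a sink nor an infinite emitter. -/
def IsRegular (v : E.V) : Prop := (E.emits v).Nonempty ∧ (E.emits v).Finite

/-- A hereditary set of vertices: `T(H) ⊆ H`. -/
def Hereditary (H : Set E.V) : Prop := ∀ u ∈ H, ∀ v, E.Reaches u v → v ∈ H

/-- A saturated set of vertices. -/
def Saturated (H : Set E.V) : Prop :=
  ∀ v, E.IsRegular v → (∀ e ∈ E.emits v, E.r e ∈ H) → v ∈ H

/-- The saturated closure of `W`: the smallest hereditary and saturated set containing `W`. -/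
def satClosure (W : Set E.V) : Set E.V :=
  ⋂₀ {H : Set E.V | E.Hereditary H ∧ E.Saturated H ∧ W ⊆ H}

/-- `es` is a finite walk (path) starting at `u`; `es = []` is the trivial path at `u`. -/
def IsWalkFrom (u : E.V) (es : List E.Ed) : Prop :=
  es.Chain' (fun e f => E.r e = E.s f) ∧ ∀ e ∈ es.head?, E.s e = u

/-- The terminal vertex (range) of the walk `es` starting at `u`. -/
def endVert (u : E.V) (es : List E.Ed) : E.V := es.getLast?.elim u E.r

/-- The set of vertices on the walk `es` starting at `u`. -/
def walkVerts (u : E.V) (es : List E.Ed) : Set E.V :=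
  insert u {v | ∃ e ∈ es, E.r e = v}

/-- An infinite path. -/
def IsInfPath (f : ℕ → E.Ed) : Prop := ∀ n, E.r (f n) = E.s (f (n + 1))

/-- The set of vertices on an infinite path. -/
def infVerts (f : ℕ → E.Ed) : Set E.V := Set.range fun n => E.s (f n)

/-- Elements of `E^{≤∞}`: finite walks or infinite paths. -/
inductive GPath (E : DGraph) : Type where
  | fin : E.V → List E.Ed → GPath E
  | inf : (ℕ → E.Ed) → GPath E

/-- Membership in `E^{≤∞}`: a well-formed finite path ending in a sink or an infinite
emitter, or an infinite path. -/
def gmem : GPath E → Prop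
  | .fin u es => E.IsWalkFrom u es ∧
      (E.IsSink (E.endVert u es) ∨ E.IsInfEmitter (E.endVert u es))
  | .inf f => E.IsInfPath f

/-- `p⁰`, the vertex set of an element of `E^{≤∞}`. -/
def gverts : GPath E → Set E.V
  | .fin u es => E.walkVerts u es
  | .inf f => E.infVerts f

/-- The graph `E` is cofinal. -/
def Cofinal : Prop :=
  ∀ v : E.V, ∀ p : GPath E, E.gmem p → ∃ w ∈ E.gverts p, E.Reaches v w

/-- `es` is a cycle based at `u`. -/
def IsCycle (u : E.V) (es : List E.Ed) : Prop :=
  es ≠ [] ∧ E.IsWalkFrom u es ∧ E.endVert u es = u ∧ (es.map E.s).Nodup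

/-- The cycle `es` (based at `u`) has an exit. -/
def HasExit (u : E.V) (es : List E.Ed) : Prop :=
  ∃ v ∈ E.walkVerts u es, ∃ e, E.s e = v ∧ e ∉ es

/-- An extreme cycle: a cycle with an exit such that `T(c⁰) ⊆ R(c⁰)`. -/
def IsExtremeCycle (u : E.V) (es : List E.Ed) : Prop :=
  E.IsCycle u es ∧ E.HasExit u es ∧
    E.tree (E.walkVerts u es) ⊆ E.root (E.walkVerts u es)

/-- `v` lies on some cycle. -/
def OnCycle (v : E.V) : Prop := ∃ u es, E.IsCycle u es ∧ v ∈ E.walkVerts u es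

/-- A terminal (infinite) path. -/
def IsTerminalPath (f : ℕ → E.Ed) : Prop :=
  E.IsInfPath f ∧
  (∀ v ∈ E.tree (E.infVerts f), ¬ E.IsInfEmitter v ∧ ¬ E.OnCycle v) ∧
  (∀ g : ℕ → E.Ed, E.IsInfPath g → E.s (g 0) ∈ E.infVerts f →
      E.tree (E.infVerts g) ⊆ E.root (E.infVerts g))

/-- A terminal vertex: a sink, a vertex on a cycle without exits, a vertex on an
extreme cycle, or a vertex on a terminal path. -/
def IsTerminalVert (v : E.V) : Prop :=
  E.IsSink v ∨
  (∃ u es, E.IsCycle u es ∧ ¬ E.HasExit u es ∧ v ∈ E.walkVerts u es) ∨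
  (∃ u es, E.IsExtremeCycle u es ∧ v ∈ E.walkVerts u es) ∨
  (∃ f, E.IsTerminalPath f ∧ v ∈ E.infVerts f)

/-- `p ∼ q` for elements of `E^{≤∞}`: `R(p⁰) = R(q⁰)`. -/
def pequiv (p q : GPath E) : Prop := E.root (E.gverts p) = E.root (E.gverts q)

/-- `v ≈ w` for terminal vertices. -/
def approx (v w : E.V) : Prop :=
  E.IsTerminalVert v ∧ E.IsTerminalVert w ∧
  ∃ p q : GPath E, E.gmem p ∧ E.gmem q ∧ v ∈ E.gverts p ∧ w ∈ E.gverts q ∧ E.pequiv p q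

/-- The cluster of a terminal vertex `v`: its `≈`-equivalence class. -/
def cluster (v : E.V) : Set E.V := {w | E.approx v w}

/-- `C` is a cluster of `E`. -/
def IsCluster (C : Set E.V) : Prop := ∃ v, E.IsTerminalVert v ∧ C = E.cluster v

/-- `Ter(E)`: the saturated closure of the set of terminal vertices. -/
def Ter : Set E.V := E.satClosure {v | E.IsTerminalVert v}

/-- The set `B_H` of breaking vertices of a (hereditary and saturated) set `H`. -/
def breaking (H : Set E.V) : Set E.V :=
  {v | v ∉ H ∧ E.IsInfEmitter v ∧
    {e | E.s e = v ∧ E.r e ∉ H}.Nonempty ∧ {e | E.s e = v ∧ E.r e ∉ H}.Finite}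

/-- `(H, S)` is an admissible pair. -/
def Admissible (H S : Set E.V) : Prop :=
  E.Hereditary H ∧ E.Saturated H ∧ S ⊆ E.breaking H

end DGraph

/-! Everything rests on two facts about a terminal path `g`. First, every infinite path `k`
starting in `T(g⁰)` is again terminal (prepend a path from `g⁰` to `k` and apply the
definition), so `T(k⁰) ⊆ R(k⁰)` forces all of `g⁰` back into `R(k⁰)` and `k ∼ g`. Second, a
hereditary saturated set `H` meeting `T(g⁰)` contains all of `T(g⁰)`: the vertices of
`T(g⁰) \ H` are regular, so saturation gives each of them an edge into `T(g⁰) \ H`, and the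
resulting infinite path avoiding `H` would have to return to the tail of `g`, which lies in `H`.
The other kinds of terminal vertices (sinks, vertices on cycles without exits or on extreme
cycles) cannot lie in `R(α⁰)`, since everything in `T(α⁰)` emits an edge and lies on no
cycle. -/

namespace DGraph

variable {E : DGraph}

section Reach

theorem subset_tree (W : Set E.V) : W ⊆ E.tree W :=
  fun x hx => ⟨x, hx, .refl⟩

theorem subset_root (W : Set E.V) : W ⊆ E.root W :=
  fun x hx => ⟨x, hx, .refl⟩

theorem mem_tree_of_reaches {W : Set E.V} {x y : E.V} (hx : x ∈ E.tree W)
    (h : E.Reaches x y) : y ∈ E.tree W :=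
  let ⟨w, hw, hwx⟩ := hx; ⟨w, hw, hwx.trans h⟩

theorem mem_root_of_reaches {W : Set E.V} {x y : E.V} (hy : y ∈ E.root W)
    (h : E.Reaches x y) : x ∈ E.root W :=
  let ⟨w, hw, hyw⟩ := hy; ⟨w, hw, h.trans hyw⟩

theorem tree_subset_of_subset_tree {A B : Set E.V} (h : A ⊆ E.tree B) :
    E.tree A ⊆ E.tree B :=
  fun _ ⟨_, ha, hr⟩ => mem_tree_of_reaches (h ha) hr

theorem root_subset_of_subset_root {A B : Set E.V} (h : A ⊆ E.root B) :
    E.root A ⊆ E.root B :=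
  fun _ ⟨_, ha, hr⟩ => mem_root_of_reaches (h ha) hr

theorem root_mono {A B : Set E.V} (h : A ⊆ B) : E.root A ⊆ E.root B :=
  root_subset_of_subset_root (h.trans (subset_root B))

theorem exists_emit_of_reaches {x y : E.V} (hr : E.Reaches x y) (hy : ∃ e, E.s e = y) :
    ∃ e, E.s e = x := by
  rcases hr.cases_head with rfl | ⟨_, ⟨e, he, _⟩, _⟩
  exacts [hy, ⟨e, he⟩]

end Reach

section InfPath

theorem IsInfPath.reaches {k : ℕ → E.Ed} (hk : E.IsInfPath k) {m n : ℕ} (h : m ≤ n) :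
    E.Reaches (E.s (k m)) (E.s (k n)) := by
  induction h with
  | refl => exact .refl
  | step _ ih => exact ih.tail ⟨_, rfl, hk _⟩

theorem IsInfPath.infVerts_subset_tree {k : ℕ → E.Ed} (hk : E.IsInfPath k) {W : Set E.V}
    (h0 : E.s (k 0) ∈ E.tree W) : E.infVerts k ⊆ E.tree W := by
  rintro _ ⟨n, rfl⟩
  exact mem_tree_of_reaches h0 (hk.reaches n.zero_le)

theorem IsInfPath.tail {k : ℕ → E.Ed} (hk : E.IsInfPath k) (n : ℕ) :
    E.IsInfPath fun m => k (n + m) :=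
  fun m => hk (n + m)

theorem infVerts_tail_subset (k : ℕ → E.Ed) (n : ℕ) :
    E.infVerts (fun m => k (n + m)) ⊆ E.infVerts k := by
  rintro _ ⟨m, rfl⟩
  exact ⟨n + m, rfl⟩

theorem exists_emit_of_mem_root {k : ℕ → E.Ed} {x : E.V} (hx : x ∈ E.root (E.infVerts k)) :
    ∃ e, E.s e = x := by
  obtain ⟨_, ⟨n, rfl⟩, hr⟩ := hx
  exact exists_emit_of_reaches hr ⟨k n, rfl⟩

theorem exists_isInfPath_of_forall_exists (P : E.V → Prop)
    (hP : ∀ u, P u → ∃ e, E.s e = u ∧ P (E.r e)) {x : E.V} (hx : P x) :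
    ∃ k : ℕ → E.Ed, E.IsInfPath k ∧ E.s (k 0) = x ∧ ∀ n, P (E.s (k n)) := by
  choose next hnext_s hnext_P using hP
  let step : {u // P u} → {u // P u} := fun y => ⟨E.r (next y.1 y.2), hnext_P _ y.2⟩
  let u : ℕ → {u // P u} := fun n => step^[n] ⟨x, hx⟩
  refine ⟨fun n => next (u n).1 (u n).2, fun n => ?_, hnext_s x hx, fun n => ?_⟩
  · rw [hnext_s]
    simp only [u, Function.iterate_succ_apply', step]
  · rw [hnext_s]
    exact (u n).2

theorem IsInfPath.exists_prepend {k : ℕ → E.Ed} (hk : E.IsInfPath k) {x : E.V}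
    (hr : E.Reaches x (E.s (k 0))) :
    ∃ k' : ℕ → E.Ed, E.IsInfPath k' ∧ E.s (k' 0) = x ∧
      E.infVerts k ⊆ E.infVerts k' ∧ E.infVerts k' ⊆ E.root (E.infVerts k) := by
  induction hr using Relation.ReflTransGen.head_induction_on with
  | refl => exact ⟨k, hk, rfl, subset_rfl, subset_root _⟩
  | head hadj _ ih =>
    obtain ⟨k', hk', hk'0, hsub, hroot⟩ := ih
    obtain ⟨e, rfl, hre⟩ := hadj
    refine ⟨Stream'.cons e k', ?_, rfl, ?_, ?_⟩
    · rintro (_ | n)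
      exacts [hre.trans hk'0.symm, hk' n]
    · rintro _ ⟨n, rfl⟩
      obtain ⟨m, hm⟩ := hsub ⟨n, rfl⟩
      exact ⟨m + 1, hm⟩
    · rintro _ ⟨_ | n, rfl⟩
      · exact mem_root_of_reaches (hroot ⟨0, hk'0⟩) (.single ⟨e, rfl, hre⟩)
      · exact hroot ⟨n, rfl⟩

theorem infVerts_subset_root_of_reaches {k g : ℕ → E.Ed}
    (hk : E.tree (E.infVerts k) ⊆ E.root (E.infVerts k)) (hg : E.IsInfPath g) {x : E.V}
    (hx : x ∈ E.infVerts k) {n : ℕ} (hxg : E.Reaches x (E.s (g n))) :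
    E.infVerts g ⊆ E.root (E.infVerts k) := by
  rintro _ ⟨j, rfl⟩
  have hlate : E.s (g (max j n)) ∈ E.tree (E.infVerts k) :=
    ⟨x, hx, hxg.trans (hg.reaches (le_max_right j n))⟩
  exact mem_root_of_reaches (hk hlate) (hg.reaches (le_max_left j n))

end InfPath

section Walk

theorem endVert_cons (u : E.V) (e : E.Ed) (es : List E.Ed) :
    E.endVert u (e :: es) = E.endVert (E.r e) es := by
  cases es <;> simp [endVert, List.getLast?_cons]

theorem IsWalkFrom.reaches_endVert {u : E.V} {es : List E.Ed} (h : E.IsWalkFrom u es)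
    {w : E.V} (hw : w ∈ E.walkVerts u es) : E.Reaches w (E.endVert u es) := by
  induction es generalizing u w with
  | nil =>
    obtain rfl | ⟨_, he, _⟩ := hw
    exacts [.refl, absurd he List.not_mem_nil]
  | cons e es ih =>
    obtain ⟨hch, hhead⟩ := h
    rw [List.Chain', List.isChain_cons] at hch
    have hrest : E.IsWalkFrom (E.r e) es := ⟨hch.2, fun f hf => (hch.1 f hf).symm⟩
    rw [endVert_cons]
    obtain rfl | ⟨e', he', rfl⟩ := hw
    · exact .head ⟨e, hhead e rfl, rfl⟩ (ih hrest (Set.mem_insert _ _))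
    · obtain rfl | he' := List.mem_cons.mp he'
      exacts [ih hrest (Set.mem_insert _ _), ih hrest (Or.inr ⟨e', he', rfl⟩)]

theorem mem_walkVerts_of_not_hasExit {u : E.V} {es : List E.Ed} (hex : ¬ E.HasExit u es)
    {w z : E.V} (hw : w ∈ E.walkVerts u es) (hr : E.Reaches w z) : z ∈ E.walkVerts u es := by
  induction hr with
  | refl => exact hw
  | tail _ hadj ih =>
    obtain ⟨e, hse, rfl⟩ := hadj
    have he : e ∈ es := by_contra fun he => hex ⟨_, ih, e, hse, he⟩
    exact Or.inr ⟨e, he, rfl⟩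

end Walk

section SatClosure

theorem mem_satClosure {W : Set E.V} {x : E.V} :
    x ∈ E.satClosure W ↔ ∀ H, E.Hereditary H → E.Saturated H → W ⊆ H → x ∈ H :=
  ⟨fun h H h₁ h₂ h₃ => h H ⟨h₁, h₂, h₃⟩, fun h H hH => h H hH.1 hH.2.1 hH.2.2⟩

theorem satClosure_hereditary (W : Set E.V) : E.Hereditary (E.satClosure W) :=
  fun u hu z hr => mem_satClosure.mpr fun H h₁ h₂ h₃ =>
    h₁ u (mem_satClosure.mp hu H h₁ h₂ h₃) z hr

theorem satClosure_saturated (W : Set E.V) : E.Saturated (E.satClosure W) :=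
  fun z hreg hall => mem_satClosure.mpr fun H h₁ h₂ h₃ =>
    h₂ z hreg fun e he => mem_satClosure.mp (hall e he) H h₁ h₂ h₃

theorem subset_satClosure (W : Set E.V) : W ⊆ E.satClosure W :=
  fun _ hx => mem_satClosure.mpr fun _ _ _ h => h hx

theorem satClosure_subset {W H : Set E.V} (h₁ : E.Hereditary H) (h₂ : E.Saturated H)
    (h₃ : W ⊆ H) : E.satClosure W ⊆ H :=
  fun _ hx => mem_satClosure.mp hx H h₁ h₂ h₃

theorem satClosure_eq_of_subset {A B : Set E.V} (hAB : A ⊆ B) (hBA : B ⊆ E.satClosure A) :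
    E.satClosure A = E.satClosure B :=
  (satClosure_subset (satClosure_hereditary B) (satClosure_saturated B)
      (hAB.trans (subset_satClosure B))).antisymm
    (satClosure_subset (satClosure_hereditary A) (satClosure_saturated A) hBA)

end SatClosure

namespace IsTerminalPath

variable {g : ℕ → E.Ed} (hg : E.IsTerminalPath g)
include hg

theorem tree_subset_root : E.tree (E.infVerts g) ⊆ E.root (E.infVerts g) :=
  hg.2.2 g hg.1 ⟨0, rfl⟩

theorem isRegular {x : E.V} (hx : x ∈ E.tree (E.infVerts g)) : E.IsRegular x :=
  ⟨exists_emit_of_mem_root (hg.tree_subset_root hx),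
    Set.not_infinite.mp (hg.2.1 x hx).1⟩

theorem of_start_mem_tree {k : ℕ → E.Ed} (hk : E.IsInfPath k)
    (h0 : E.s (k 0) ∈ E.tree (E.infVerts g)) : E.IsTerminalPath k := by
  have hkT := tree_subset_of_subset_tree (hk.infVerts_subset_tree h0)
  refine ⟨hk, fun x hx => hg.2.1 x (hkT hx), fun k' hk' hk'0 => ?_⟩
  obtain ⟨x, hxg, hxk'⟩ := hkT (subset_tree _ hk'0)
  obtain ⟨k'', hk'', hk''0, hsub, hroot⟩ := hk'.exists_prepend hxk'
  have hk''T := hg.2.2 k'' hk'' (hk''0 ▸ hxg)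
  exact fun z hz => root_subset_of_subset_root hroot
    (hk''T (tree_subset_of_subset_tree (hsub.trans (subset_tree _)) hz))

theorem root_eq_of_start_mem_tree {k : ℕ → E.Ed} (hk : E.IsInfPath k)
    (h0 : E.s (k 0) ∈ E.tree (E.infVerts g)) :
    E.root (E.infVerts k) = E.root (E.infVerts g) := by
  refine subset_antisymm ?_ ?_
  · exact root_subset_of_subset_root
      ((hk.infVerts_subset_tree h0).trans hg.tree_subset_root)
  · obtain ⟨_, ⟨n, rfl⟩, hr⟩ := hg.tree_subset_root h0
    exact root_subset_of_subset_root
      (infVerts_subset_root_of_reaches (hg.of_start_mem_tree hk h0).tree_subset_root hg.1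
        ⟨0, rfl⟩ hr)

theorem root_eq_of_mem {k : ℕ → E.Ed} (hk : E.IsInfPath k) {x : E.V}
    (hxg : x ∈ E.infVerts g) (hxk : x ∈ E.infVerts k) :
    E.root (E.infVerts k) = E.root (E.infVerts g) := by
  obtain ⟨n, rfl⟩ := hxk
  have htail := hg.root_eq_of_start_mem_tree (hk.tail n) (subset_tree _ hxg)
  refine subset_antisymm ?_ (htail ▸ root_mono (infVerts_tail_subset k n))
  exact root_subset_of_subset_root
    (infVerts_subset_root_of_reaches hg.tree_subset_root hk hxg .refl)

theorem exists_isTerminalPath_from {w : E.V} (hw : w ∈ E.tree (E.infVerts g)) :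
    ∃ h : ℕ → E.Ed, E.IsTerminalPath h ∧ E.s (h 0) = w ∧
      E.root (E.infVerts h) = E.root (E.infVerts g) := by
  have hstep :
      ∀ u ∈ E.tree (E.infVerts g), ∃ e, E.s e = u ∧ E.r e ∈ E.tree (E.infVerts g) :=
    fun u hu => let ⟨e, he⟩ := exists_emit_of_mem_root (hg.tree_subset_root hu)
      ⟨e, he, mem_tree_of_reaches hu (.single ⟨e, he, rfl⟩)⟩
  obtain ⟨h, hh, rfl, -⟩ := exists_isInfPath_of_forall_exists _ hstep hw
  exact ⟨h, hg.of_start_mem_tree hh hw, rfl, hg.root_eq_of_start_mem_tree hh hw⟩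

theorem tree_subset_of_mem {H : Set E.V} (hH : E.Hereditary H) (hsat : E.Saturated H)
    {u : E.V} (hu : u ∈ E.tree (E.infVerts g)) (huH : u ∈ H) :
    E.tree (E.infVerts g) ⊆ H := by
  intro y hy
  by_contra hyH
  have hstep : ∀ z, z ∈ E.tree (E.infVerts g) ∧ z ∉ H →
      ∃ e, E.s e = z ∧ (E.r e ∈ E.tree (E.infVerts g) ∧ E.r e ∉ H) := by
    rintro z ⟨hz, hzH⟩
    by_contra! hall
    exact hzH (hsat z (hg.isRegular hz) fun e he =>
      hall e he (mem_tree_of_reaches hz (.single ⟨e, he, rfl⟩)))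
  obtain ⟨k, hk, rfl, hkP⟩ := exists_isInfPath_of_forall_exists _ hstep ⟨hy, hyH⟩
  obtain ⟨_, ⟨m, rfl⟩, hum⟩ := hg.tree_subset_root hu
  obtain ⟨_, ⟨j, rfl⟩, hyj⟩ := hg.tree_subset_root hy
  obtain ⟨_, ⟨i, rfl⟩, hmi⟩ := infVerts_subset_root_of_reaches
    (hg.of_start_mem_tree hk hy).tree_subset_root hg.1 ⟨0, rfl⟩ hyj ⟨m, rfl⟩
  exact (hkP i).2 (hH _ (hH u huH _ hum) _ hmi)

theorem pequiv_inf {x : E.V} (hx : x ∈ E.infVerts g) {p : GPath E} (hp : E.gmem p)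
    (hxp : x ∈ E.gverts p) : E.pequiv p (GPath.inf g) := by
  cases p with
  | fin u es =>
    obtain ⟨hwalk, hend⟩ := hp
    have hT : E.endVert u es ∈ E.tree (E.infVerts g) :=
      ⟨x, hx, hwalk.reaches_endVert hxp⟩
    refine hend.elim (fun hsink => ?_) (fun hinf => absurd hinf (hg.2.1 _ hT).1)
    obtain ⟨e, he⟩ := (hg.isRegular hT).1
    exact absurd (hsink ▸ he) (Set.notMem_empty e)
  | inf k => exact hg.root_eq_of_mem hp hx hxp

theorem exists_isTerminalPath_mem_of_isTerminalVert {w : E.V} (hw : E.IsTerminalVert w)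
    (hwr : w ∈ E.root (E.infVerts g)) : ∃ g', E.IsTerminalPath g' ∧ w ∈ E.infVerts g' := by
  have hcyc :
      ∀ u es, E.IsCycle u es → ∀ y ∈ E.walkVerts u es, y ∉ E.tree (E.infVerts g) :=
    fun u es hc y hy hyT => (hg.2.1 y hyT).2 ⟨u, es, hc, hy⟩
  obtain ⟨_, ⟨j, rfl⟩, hwj⟩ := hwr
  rcases hw with hsink | ⟨u, es, hc, hex, hwc⟩ | ⟨u, es, ⟨hc, -, hext⟩, hwc⟩ | hpath
  · obtain ⟨e, he⟩ := exists_emit_of_reaches hwj ⟨g j, rfl⟩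
    exact absurd (hsink ▸ he) (Set.notMem_empty e)
  · exact absurd (subset_tree (E.infVerts g) ⟨j, rfl⟩)
      (hcyc u es hc _ (mem_walkVerts_of_not_hasExit hex hwc hwj))
  · obtain ⟨y, hy, hjy⟩ := hext ⟨w, hwc, hwj⟩
    exact absurd ⟨_, ⟨j, rfl⟩, hjy⟩ (hcyc u es hc y hy)
  · exact hpath

end IsTerminalPath

section Cluster

variable {f : ℕ → E.Ed} (hf : E.IsTerminalPath f) {v : E.V} (hv : v ∈ E.infVerts f)
include hf hv

theorem infVerts_subset_cluster : E.infVerts f ⊆ E.cluster v :=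
  fun _ hz => ⟨.inr (.inr (.inr ⟨f, hf, hv⟩)), .inr (.inr (.inr ⟨f, hf, hz⟩)),
    .inf f, .inf f, hf.1, hf.1, hv, hz, rfl⟩

theorem cluster_eq_iUnion_tree :
    E.cluster v = {w | ∃ g : ℕ → E.Ed, E.IsTerminalPath g ∧
      E.root (E.infVerts g) = E.root (E.infVerts f) ∧ w ∈ E.tree (E.infVerts g)} := by
  ext w
  constructor
  · rintro ⟨-, hw, p, q, hp, hq, hvp, hwq, hpq⟩
    have hqf : E.root (E.gverts q) = E.root (E.infVerts f) :=
      hpq.symm.trans (hf.pequiv_inf hv hp hvp)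
    obtain ⟨g, hg, hwg⟩ :=
      hf.exists_isTerminalPath_mem_of_isTerminalVert hw (hqf ▸ subset_root _ hwq)
    exact ⟨g, hg, (hg.pequiv_inf hwg hq hwq).symm.trans hqf, subset_tree _ hwg⟩
  · rintro ⟨g, hg, hgf, hw⟩
    obtain ⟨h, hh, rfl, hhg⟩ := hg.exists_isTerminalPath_from hw
    exact ⟨(infVerts_subset_cluster hf hv hv).1, .inr (.inr (.inr ⟨h, hh, 0, rfl⟩)),
      .inf f, .inf h, hf.1, hh.1, hv, ⟨0, rfl⟩, (hhg.trans hgf).symm⟩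

theorem cluster_subset_of_mem {H : Set E.V} (hH : E.Hereditary H) (hsat : E.Saturated H)
    {u : E.V} (hu : u ∈ E.cluster v) (huH : u ∈ H) : E.cluster v ⊆ H := by
  rw [cluster_eq_iUnion_tree hf hv] at hu ⊢
  obtain ⟨gu, hgu, hguf, huT⟩ := hu
  have hTu := hgu.tree_subset_of_mem hH hsat huT huH
  rintro w ⟨gw, hgw, hgwf, hwT⟩
  obtain ⟨z, hz, hr⟩ : E.s (gu 0) ∈ E.root (E.infVerts gw) :=
    hgwf.trans hguf.symm ▸ subset_root _ ⟨0, rfl⟩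
  exact hgw.tree_subset_of_mem hH hsat (subset_tree _ hz)
    (hH _ (hTu (subset_tree _ ⟨0, rfl⟩)) z hr) hwT

theorem tree_cluster : E.tree (E.cluster v) = E.cluster v := by
  refine (subset_tree _).antisymm' fun z ⟨w, hw, hwz⟩ => ?_
  rw [cluster_eq_iUnion_tree hf hv] at hw ⊢
  obtain ⟨g, hg, hgf, hwT⟩ := hw
  exact ⟨g, hg, hgf, mem_tree_of_reaches hwT hwz⟩

end Cluster

end DGraph

/-- Lemma, terminal path case: if `v` lies on a terminal path `α`
with cluster `C`, then any `p ∈ E^{≤∞}` with `v ∈ p⁰` satisfies `p ∼ α`;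
`C = T(C)` and `C` is the union of the `T(β⁰)` over terminal paths `β ∼ α`;
and `satClosure C = satClosure α⁰ = satClosure {u}` for any `u ∈ C`. -/
theorem cluster_of_terminal_path (E : DGraph) (f : ℕ → E.Ed)
    (hf : E.IsTerminalPath f) (v : E.V) (hv : v ∈ E.infVerts f) :
    (∀ p : DGraph.GPath E, E.gmem p → v ∈ E.gverts p →
      E.pequiv p (DGraph.GPath.inf f)) ∧
    E.tree (E.cluster v) = E.cluster v ∧
    E.cluster v = {w | ∃ g : ℕ → E.Ed, E.IsTerminalPath g ∧
      E.root (E.infVerts g) = E.root (E.infVerts f) ∧ w ∈ E.tree (E.infVerts g)} ∧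
    E.satClosure (E.cluster v) = E.satClosure (E.infVerts f) ∧
    ∀ u ∈ E.cluster v, E.satClosure (E.cluster v) = E.satClosure {u} := by
  open DGraph in
  have hC_sat {u : E.V} (hu : u ∈ E.cluster v) (W : Set E.V) (huW : u ∈ E.satClosure W) :
      E.cluster v ⊆ E.satClosure W :=
    cluster_subset_of_mem hf hv (satClosure_hereditary W) (satClosure_saturated W) hu huW
  have hvC : v ∈ E.cluster v := infVerts_subset_cluster hf hv hv
  refine ⟨fun p hp hvp => hf.pequiv_inf hv hp hvp, tree_cluster hf hv,
    cluster_eq_iUnion_tree hf hv, ?_, fun u hu => ?_⟩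
  · exact (satClosure_eq_of_subset (infVerts_subset_cluster hf hv)
      (hC_sat hvC _ (subset_satClosure _ hv))).symm
  · exact (satClosure_eq_of_subset (Set.singleton_subset_iff.mpr hu)
      (hC_sat hu _ (subset_satClosure _ rfl))).symm
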